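/- arXiv:math/9909157 — 3 statements merged into one kernel-verified Lean document; each statement's English description precedes it below -/
import Mathlib

section
/- The Kubo-Mori bilinear form G_D(X,Y) = ∫_0^∞ Tr((D+tI)^{-1} X (D+tI)^{-1} Y) dt on real symmetric matrices is symmetric in X and Y, and is positive definite: G_D(X,X) > 0 for X ≠ 0. -/
/-!
Diagonalise `D = U diag(μ) Uᵀ`. For `t > 0` the resolvent is
`(D + t)⁻¹ = U diag((μ + t)⁻¹) Uᵀ`, so writing `Y = Uᵀ X U` (symmetric, and nonzero when `X`
is) the integrand of `G_D(X, X)` is `∑ᵢⱼ Yᵢⱼ² / ((μᵢ + t)(μⱼ + t))`. Each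
`t ↦ 1 / ((μᵢ + t)(μⱼ + t))` is positive and decays like `t⁻²`, hence has a finite positive
integral, and `G_D(X, X)` is a nonnegative combination of these integrals with some coefficient
`Yᵢⱼ² > 0`. Symmetry is cyclicity of the trace, pointwise in `t`.
-/

open MeasureTheory Matrix Set

/-- The Kubo-Mori bilinear form on real symmetric matrices. -/
noncomputable def kuboMori (n : ℕ) (D X Y : Matrix (Fin n) (Fin n) ℝ) : ℝ :=
  ∫ t in Set.Ioi (0:ℝ), Matrix.trace ((D + t • 1)⁻¹ * X * (D + t • 1)⁻¹ * Y)

theorem integrableOn_Ioi_inv_add_mul_inv_add {a b : ℝ} (ha : 0 < a) (hb : 0 < b) :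
    IntegrableOn (fun t : ℝ => (a + t)⁻¹ * (b + t)⁻¹) (Ioi 0) := by
  have hm : 0 < min a b := lt_min ha hb
  refine (integrableOn_add_rpow_Ioi_of_lt (by norm_num : (-2 : ℝ) < -1)
    (neg_lt_zero.mpr hm)).mono' (by fun_prop) ?_
  filter_upwards [ae_restrict_mem measurableSet_Ioi] with t (ht : 0 < t)
  rw [Real.norm_of_nonneg (by positivity), Real.rpow_neg (by positivity), Real.rpow_two, sq,
    mul_inv, add_comm t]
  gcongr
  exacts [min_le_left a b, min_le_right a b]

theorem setIntegral_Ioi_inv_add_mul_inv_add_pos {a b : ℝ} (ha : 0 < a) (hb : 0 < b) :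
    0 < ∫ t in Ioi 0, (a + t)⁻¹ * (b + t)⁻¹ := by
  have hpos : ∀ t ∈ Ioi (0 : ℝ), 0 < (a + t)⁻¹ * (b + t)⁻¹ := fun t (ht : 0 < t) => by
    positivity
  rw [setIntegral_pos_iff_support_of_nonneg_ae
      (ae_restrict_of_forall_mem measurableSet_Ioi fun t ht => (hpos t ht).le)
      (integrableOn_Ioi_inv_add_mul_inv_add ha hb),
    inter_eq_right.mpr fun t ht => Function.mem_support.mpr (hpos t ht).ne']
  simp

namespace Matrix

variable {ι : Type*} [Fintype ι]

theorem sum_sum_sq_mul_pos {Y : Matrix ι ι ℝ} (hY : Y ≠ 0) {c : ι → ι → ℝ}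
    (hc : ∀ i j, 0 < c i j) : 0 < ∑ i, ∑ j, Y i j ^ 2 * c i j := by
  obtain ⟨i, j, hij⟩ : ∃ i j, Y i j ≠ 0 := by simpa [← Matrix.ext_iff] using hY
  have hnonneg : ∀ i j, 0 ≤ Y i j ^ 2 * c i j := fun i j => mul_nonneg (sq_nonneg _) (hc i j).le
  exact Finset.sum_pos' (fun i _ => Finset.sum_nonneg fun j _ => hnonneg i j)
    ⟨i, Finset.mem_univ _, Finset.sum_pos' (fun j _ => hnonneg i j)
      ⟨j, Finset.mem_univ _, mul_pos (sq_pos_of_ne_zero hij) (hc i j)⟩⟩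

theorem IsSymm.star_mul_mul {X : Matrix ι ι ℝ} (hX : X.IsSymm) (U : Matrix ι ι ℝ) :
    (star U * X * U).IsSymm := by
  simp [IsSymm, star_eq_conjTranspose, transpose_mul, hX.eq, mul_assoc]

variable [DecidableEq ι]

theorem inv_diagonal_of_ne_zero {K : Type*} [Field K] {v : ι → K} (hv : ∀ i, v i ≠ 0) :
    (diagonal v)⁻¹ = diagonal fun i => (v i)⁻¹ := by
  refine inv_eq_right_inv ?_
  rw [diagonal_mul_diagonal, ← diagonal_one]
  exact congrArg diagonal (funext fun i => mul_inv_cancel₀ (hv i))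

theorem inv_mul_mul_star_of_mem_unitaryGroup {K : Type*} [Field K] [StarRing K]
    {U : Matrix ι ι K} (hU : U ∈ unitaryGroup ι K) (A : Matrix ι ι K) :
    (U * A * star U)⁻¹ = U * A⁻¹ * star U := by
  rw [mul_inv_rev, mul_inv_rev, inv_eq_left_inv (mem_unitaryGroup_iff.mp hU),
    inv_eq_left_inv (mem_unitaryGroup_iff'.mp hU), mul_assoc]

theorem trace_diagonal_mul_diagonal_mul {R : Type*} [CommSemiring R] (d : ι → R)
    (A B : Matrix ι ι R) :
    trace (diagonal d * A * diagonal d * B) = ∑ i, ∑ j, d i * d j * (A i j * B j i) := by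
  simp only [trace, diag_apply, mul_apply (M := diagonal d * A * diagonal d), mul_diagonal,
    diagonal_mul]
  exact Finset.sum_congr rfl fun i _ => Finset.sum_congr rfl fun j _ => by ring

namespace IsHermitian

variable {D : Matrix ι ι ℝ} (hD : D.IsHermitian)

local notation "U" => (hD.eigenvectorUnitary : Matrix ι ι ℝ)

theorem spectral_theorem_add_smul_one (t : ℝ) :
    D + t • 1 = U * diagonal (fun i => hD.eigenvalues i + t) * star U := by
  rw [← Unitary.conjStarAlgAut_apply (S := ℝ), ← diagonal_add, ← smul_one_eq_diagonal, map_add,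
    map_smul, map_one]
  conv_lhs => rw [hD.spectral_theorem]
  rfl

theorem inv_add_smul_one {t : ℝ} (ht : ∀ i, hD.eigenvalues i + t ≠ 0) :
    (D + t • 1)⁻¹ = U * diagonal (fun i => (hD.eigenvalues i + t)⁻¹) * star U := by
  rw [hD.spectral_theorem_add_smul_one,
    inv_mul_mul_star_of_mem_unitaryGroup hD.eigenvectorUnitary.2, inv_diagonal_of_ne_zero ht]

theorem trace_inv_add_smul_one_mul_inv_add_smul_one_mul {t : ℝ}
    (ht : ∀ i, hD.eigenvalues i + t ≠ 0) (X Y : Matrix ι ι ℝ) :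
    trace ((D + t • 1)⁻¹ * X * (D + t • 1)⁻¹ * Y) =
      ∑ i, ∑ j, (hD.eigenvalues i + t)⁻¹ * (hD.eigenvalues j + t)⁻¹ *
        ((star U * X * U) i j * (star U * Y * U) j i) := by
  have hcycle : ∀ A B : Matrix ι ι ℝ,
      trace (U * A * star U * X * (U * B * star U) * Y) =
        trace (A * (star U * X * U) * B * (star U * Y * U)) := fun A B => by
    simp only [mul_assoc]
    rw [trace_mul_comm]
    simp only [mul_assoc]
  rw [hD.inv_add_smul_one ht, hcycle, trace_diagonal_mul_diagonal_mul]

end IsHermitian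

end Matrix

theorem kuboMori_comm (n : ℕ) (D X Y : Matrix (Fin n) (Fin n) ℝ) :
    kuboMori n D X Y = kuboMori n D Y X := by
  unfold kuboMori
  congr 1 with t
  rw [mul_assoc _ (D + t • 1)⁻¹, trace_mul_comm, ← mul_assoc]

section PosDef

variable {n : ℕ} {D : Matrix (Fin n) (Fin n) ℝ} (hD : D.PosDef)

local notation "U" => (hD.isHermitian.eigenvectorUnitary : Matrix (Fin n) (Fin n) ℝ)

theorem kuboMori_self_eq_sum {X : Matrix (Fin n) (Fin n) ℝ} (hX : X.IsSymm) :
    kuboMori n D X X = ∑ i, ∑ j, (star U * X * U) i j ^ 2 *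
      ∫ t in Ioi 0, (hD.isHermitian.eigenvalues i + t)⁻¹ *
        (hD.isHermitian.eigenvalues j + t)⁻¹ := by
  set ev := hD.isHermitian.eigenvalues
  have hint : ∀ i j, IntegrableOn
      (fun t => (star U * X * U) i j ^ 2 * ((ev i + t)⁻¹ * (ev j + t)⁻¹)) (Ioi 0) := fun i j =>
    (integrableOn_Ioi_inv_add_mul_inv_add (hD.eigenvalues_pos i)
      (hD.eigenvalues_pos j)).const_mul _
  calc kuboMori n D X X
      = ∫ t in Ioi 0, ∑ i, ∑ j, (star U * X * U) i j ^ 2 * ((ev i + t)⁻¹ * (ev j + t)⁻¹) := by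
        refine setIntegral_congr_fun measurableSet_Ioi fun t (ht : 0 < t) => ?_
        rw [hD.isHermitian.trace_inv_add_smul_one_mul_inv_add_smul_one_mul
          (fun i => (add_pos (hD.eigenvalues_pos i) ht).ne')]
        refine Finset.sum_congr rfl fun i _ => Finset.sum_congr rfl fun j _ => ?_
        rw [(hX.star_mul_mul _).apply i j]
        ring
    _ = _ := by
        rw [integral_finsetSum _ fun i _ => integrable_finsetSum _ fun j _ => hint i j]
        refine Finset.sum_congr rfl fun i _ => ?_
        rw [integral_finsetSum _ fun j _ => hint i j]
        simp only [integral_const_mul]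

end PosDef

theorem kuboMori_self_pos {n : ℕ} {D : Matrix (Fin n) (Fin n) ℝ} (hD : D.PosDef)
    {X : Matrix (Fin n) (Fin n) ℝ} (hX : X.IsSymm) (hX0 : X ≠ 0) : 0 < kuboMori n D X X := by
  let U : unitaryGroup (Fin n) ℝ := hD.isHermitian.eigenvectorUnitary
  have hXU : star (U : Matrix (Fin n) (Fin n) ℝ) * X * U ≠ 0 := by
    rw [← Unitary.conjStarAlgAut_star_apply (S := ℝ)]
    exact (map_ne_zero_iff _ (Unitary.conjStarAlgAut ℝ _ _).injective).mpr hX0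
  rw [kuboMori_self_eq_sum hD hX]
  exact sum_sum_sq_mul_pos hXU fun i j =>
    setIntegral_Ioi_inv_add_mul_inv_add_pos (hD.eigenvalues_pos i) (hD.eigenvalues_pos j)

/-- The Kubo-Mori form is symmetric in `X` and `Y` on symmetric matrices,
and positive definite: `G_D(X,X) > 0` for symmetric `X ≠ 0`. -/
theorem kuboMori_symm_posDef (n : ℕ) (D : Matrix (Fin n) (Fin n) ℝ) (hD : D.PosDef) :
    (∀ X Y : Matrix (Fin n) (Fin n) ℝ, X.IsSymm → Y.IsSymm →
      kuboMori n D X Y = kuboMori n D Y X) ∧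
    (∀ X : Matrix (Fin n) (Fin n) ℝ, X.IsSymm → X ≠ 0 → 0 < kuboMori n D X X) :=
  ⟨fun X Y _ _ => kuboMori_comm n D X Y, fun _ hX hX0 => kuboMori_self_pos hD hX hX0⟩
end

section
/- For a positive definite real symmetric matrix D, the map X ↦ ∫_0^1 D^u X D^{1-u} du is the inverse of the map X ↦ ∫_0^∞ (D+tI)^{-1} X (D+tI)^{-1} dt on symmetric matrices. -/
/-!
Write `D = U diag(λ) Uᵀ` with `U` orthogonal. Conjugating by `U`, both maps become Schur
(entrywise) multipliers: `X ↦ ∫₀^∞ (D + t)⁻¹ X (D + t)⁻¹ dt` multiplies the `(i, j)` entry by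
`∫₀^∞ dt / ((λᵢ + t)(λⱼ + t)) = (log λᵢ - log λⱼ) / (λᵢ - λⱼ)`, and `X ↦ ∫₀¹ D^u X D^(1-u) du`
by the logarithmic mean `∫₀¹ λᵢ^u λⱼ^(1-u) du = (λᵢ - λⱼ) / (log λᵢ - log λⱼ)` (these read `1/λᵢ`
and `λᵢ` when `λᵢ = λⱼ`). The two multipliers are reciprocal, so the maps are mutually inverse.
-/

open MeasureTheory Matrix
attribute [local instance] Matrix.frobeniusNormedAddCommGroup Matrix.frobeniusNormedSpace

/-- The real power `D^u` of a hermitian matrix, via the spectral functional calculus. -/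
noncomputable def matrixRpow {n : ℕ} {D : Matrix (Fin n) (Fin n) ℝ}
    (hD : D.IsHermitian) (u : ℝ) : Matrix (Fin n) (Fin n) ℝ :=
  hD.cfc (fun x => x ^ u)

open Real Set Filter Topology

noncomputable def resolventKernel (a b : ℝ) : ℝ := ∫ t in Ioi 0, (a + t)⁻¹ * (b + t)⁻¹

noncomputable def logMean (a b : ℝ) : ℝ := ∫ u in Icc (0 : ℝ) 1, a ^ u * b ^ (1 - u)

section Scalar

variable {a b : ℝ}

lemma hasDerivAt_neg_inv_add {t : ℝ} (h : a + t ≠ 0) :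
    HasDerivAt (fun t => -(a + t)⁻¹) ((a + t)⁻¹ * (a + t)⁻¹) t := by
  refine (((hasDerivAt_id t).const_add a).inv h).neg.congr_deriv ?_
  simp only [id, neg_div, neg_neg, sq, one_div, mul_inv]

lemma tendsto_neg_inv_add (a : ℝ) : Tendsto (fun t => -(a + t)⁻¹) atTop (𝓝 0) := by
  simpa using (tendsto_inv_atTop_zero.comp (tendsto_atTop_add_const_left _ a tendsto_id)).neg

lemma hasDerivAt_log_add_sub_log_add_div {t : ℝ} (ha : 0 < a + t) (hb : 0 < b + t)
    (hab : a ≠ b) :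
    HasDerivAt (fun t => (log (b + t) - log (a + t)) / (a - b)) ((a + t)⁻¹ * (b + t)⁻¹) t := by
  have hlog : ∀ c, 0 < c + t → HasDerivAt (fun t => log (c + t)) (c + t)⁻¹ t := fun c hc => by
    simpa using ((hasDerivAt_id t).const_add c).log hc.ne'
  refine ((hlog b hb).sub (hlog a ha)).div_const (a - b) |>.congr_deriv ?_
  field_simp [sub_ne_zero.mpr hab]
  ring

lemma tendsto_log_add_sub_log_add_div (a b : ℝ) :
    Tendsto (fun t => (log (b + t) - log (a + t)) / (a - b)) atTop (𝓝 0) := by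
  have h := (tendsto_log_comp_add_sub_log b).sub (tendsto_log_comp_add_sub_log a)
  simp only [sub_zero, sub_sub_sub_cancel_right] at h
  simpa only [add_comm, zero_div] using h.div_const (a - b)

variable (ha : 0 < a) (hb : 0 < b)
include ha hb

lemma integrableOn_inv_add_mul_inv_add :
    IntegrableOn (fun t => (a + t)⁻¹ * (b + t)⁻¹) (Ioi 0) := by
  have hpos : ∀ t ∈ Ioi (0 : ℝ), 0 ≤ (a + t)⁻¹ * (b + t)⁻¹ := fun t (ht : 0 < t) => by positivity
  rcases eq_or_ne a b with rfl | hab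
  · exact integrableOn_Ioi_deriv_of_nonneg'
      (fun t (ht : 0 ≤ t) => hasDerivAt_neg_inv_add (by positivity)) hpos (tendsto_neg_inv_add a)
  · exact integrableOn_Ioi_deriv_of_nonneg'
      (fun t (ht : 0 ≤ t) => hasDerivAt_log_add_sub_log_add_div (by positivity) (by positivity) hab)
      hpos (tendsto_log_add_sub_log_add_div a b)

omit hb in
lemma resolventKernel_self : resolventKernel a a = a⁻¹ := by
  rw [resolventKernel, integral_Ioi_of_hasDerivAt_of_nonneg'
    (fun t (ht : 0 ≤ t) => hasDerivAt_neg_inv_add (by positivity))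
    (fun t (ht : 0 < t) => by positivity) (tendsto_neg_inv_add a)]
  simp

lemma resolventKernel_of_ne (hab : a ≠ b) : resolventKernel a b = (log a - log b) / (a - b) := by
  rw [resolventKernel, integral_Ioi_of_hasDerivAt_of_nonneg' (fun t (ht : 0 ≤ t) =>
      hasDerivAt_log_add_sub_log_add_div (by positivity) (by positivity) hab)
    (fun t (ht : 0 < t) => by positivity) (tendsto_log_add_sub_log_add_div a b)]
  simp only [add_zero, zero_sub, ← neg_div, neg_sub]

lemma hasDerivAt_rpow_mul_rpow_one_sub (u : ℝ) :
    HasDerivAt (fun u => a ^ u * b ^ (1 - u)) (a ^ u * b ^ (1 - u) * (log a - log b)) u := by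
  refine ((hasDerivAt_id u).const_rpow ha).mul (((hasDerivAt_id u).const_sub 1).const_rpow hb)
    |>.congr_deriv ?_
  simp only [id]
  ring

lemma continuous_rpow_mul_rpow_one_sub : Continuous fun u : ℝ => a ^ u * b ^ (1 - u) :=
  continuous_iff_continuousAt.mpr fun u => (hasDerivAt_rpow_mul_rpow_one_sub ha hb u).continuousAt

omit hb in
lemma logMean_self : logMean a a = a := by
  have h : ∀ u : ℝ, a ^ u * a ^ (1 - u) = a := fun u => by
    rw [← rpow_add ha, add_sub_cancel, rpow_one]
  simp [logMean, h]

lemma log_sub_log_mul_logMean : (log a - log b) * logMean a b = a - b := by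
  have hftc := intervalIntegral.integral_eq_sub_of_hasDerivAt
    (fun u _ => hasDerivAt_rpow_mul_rpow_one_sub ha hb u)
    (((continuous_rpow_mul_rpow_one_sub ha hb).intervalIntegrable 0 1).mul_const _)
  rw [intervalIntegral.integral_mul_const, intervalIntegral.integral_of_le zero_le_one,
    ← integral_Icc_eq_integral_Ioc] at hftc
  simpa [logMean, mul_comm] using hftc

lemma resolventKernel_mul_logMean : resolventKernel a b * logMean a b = 1 := by
  rcases eq_or_ne a b with rfl | hab
  · rw [resolventKernel_self ha, logMean_self ha, inv_mul_cancel₀ ha.ne']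
  · rw [resolventKernel_of_ne ha hb hab, div_mul_eq_mul_div, log_sub_log_mul_logMean ha hb,
      div_self (sub_ne_zero.mpr hab)]

end Scalar

open Unitary

namespace Matrix

variable {ι 𝕜 : Type*} [Fintype ι] [DecidableEq ι] [RCLike 𝕜]

noncomputable def schurMultiplier (U : unitaryGroup ι 𝕜) (K X : Matrix ι ι 𝕜) : Matrix ι ι 𝕜 :=
  conjStarAlgAut 𝕜 _ U (K ⊙ (conjStarAlgAut 𝕜 _ U).symm X)

variable (U : unitaryGroup ι 𝕜)

lemma schurMultiplier_eq_sum (K X : Matrix ι ι 𝕜) :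
    schurMultiplier U K X = ∑ i, ∑ j, K i j • schurMultiplier U (single i j 1) X := by
  have hK : ∀ Y : Matrix ι ι 𝕜, K ⊙ Y = ∑ i, ∑ j, K i j • (single i j 1 ⊙ Y) := fun Y => by
    ext a b
    simp [Matrix.sum_apply, single_apply, ite_and]
  simp only [schurMultiplier, hK, map_sum, map_smul]

lemma integral_schurMultiplier {α : Type*} [MeasurableSpace α] (μ : Measure α)
    (K : α → Matrix ι ι 𝕜) (X : Matrix ι ι 𝕜) (hK : ∀ i j, Integrable (fun a => K a i j) μ) :
    ∫ a, schurMultiplier U (K a) X ∂μ = schurMultiplier U (of fun i j => ∫ a, K a i j ∂μ) X := by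
  conv_lhs => enter [2, a]; rw [schurMultiplier_eq_sum]
  conv_rhs => rw [schurMultiplier_eq_sum]
  simp only [of_apply]
  rw [integral_finsetSum _ fun i _ => integrable_finsetSum _ fun j _ => (hK i j).smul_const _]
  refine Finset.sum_congr rfl fun i _ => ?_
  rw [integral_finsetSum _ fun j _ => (hK i j).smul_const _]
  exact Finset.sum_congr rfl fun j _ => integral_smul_const _ _

lemma schurMultiplier_schurMultiplier (K L X : Matrix ι ι 𝕜) :
    schurMultiplier U K (schurMultiplier U L X) = schurMultiplier U (K ⊙ L) X := by
  simp only [schurMultiplier, StarAlgEquiv.symm_apply_apply, hadamard_assoc]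

lemma schurMultiplier_ones (X : Matrix ι ι 𝕜) : schurMultiplier U (of fun _ _ => 1) X = X := by
  have : ∀ Y : Matrix ι ι 𝕜, (of fun _ _ => 1) ⊙ Y = Y := fun Y => by ext; simp
  simp only [schurMultiplier, this, StarAlgEquiv.apply_symm_apply]

lemma diagonal_mul_mul_diagonal (f g : ι → 𝕜) (Y : Matrix ι ι 𝕜) :
    diagonal f * Y * diagonal g = (of fun i j => f i * g j) ⊙ Y := by
  ext i j
  simp only [mul_diagonal, diagonal_mul, hadamard_apply, of_apply]
  ring

lemma conj_diagonal_mul_mul_conj_diagonal (f g : ι → 𝕜) (X : Matrix ι ι 𝕜) :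
    conjStarAlgAut 𝕜 _ U (diagonal f) * X * conjStarAlgAut 𝕜 _ U (diagonal g)
      = schurMultiplier U (of fun i j => f i * g j) X := by
  rw [schurMultiplier, ← diagonal_mul_mul_diagonal, map_mul, map_mul,
    StarAlgEquiv.apply_symm_apply]

lemma inv_conj_diagonal {d : ι → 𝕜} (hd : ∀ i, d i ≠ 0) :
    (conjStarAlgAut 𝕜 _ U (diagonal d))⁻¹ = conjStarAlgAut 𝕜 _ U (diagonal d⁻¹) := by
  refine inv_eq_right_inv ?_
  have : (fun i => d i * d⁻¹ i) = fun _ => 1 := funext fun i => mul_inv_cancel₀ (hd i)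
  rw [← map_mul, diagonal_mul_diagonal, this, diagonal_one, map_one]

namespace IsHermitian

variable {A : Matrix ι ι ℝ} (hA : A.IsHermitian)
include hA

lemma add_smul_one_eq_conj_diagonal (t : ℝ) :
    A + t • 1 = conjStarAlgAut ℝ _ hA.eigenvectorUnitary
      (diagonal fun i => hA.eigenvalues i + t) := by
  have : (diagonal fun i => hA.eigenvalues i + t) = diagonal hA.eigenvalues + t • 1 := by
    rw [smul_one_eq_diagonal, diagonal_add]
  conv_lhs => rw [hA.spectral_theorem]
  rw [this, map_add, map_smul, map_one]
  rfl

end IsHermitian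

namespace PosDef

variable {A : Matrix ι ι ℝ} (hA : A.PosDef)
include hA

lemma integral_resolvent_mul_mul_resolvent (X : Matrix ι ι ℝ) :
    ∫ t in Ioi (0 : ℝ), (A + t • 1)⁻¹ * X * (A + t • 1)⁻¹
      = schurMultiplier hA.isHermitian.eigenvectorUnitary (of fun i j =>
        resolventKernel (hA.isHermitian.eigenvalues i) (hA.isHermitian.eigenvalues j)) X := by
  set U := hA.isHermitian.eigenvectorUnitary
  set eig := hA.isHermitian.eigenvalues
  have hresolvent : ∀ t ∈ Ioi (0 : ℝ),
      (A + t • 1)⁻¹ = conjStarAlgAut ℝ _ U (diagonal fun i => (eig i + t)⁻¹) := fun t ht => by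
    rw [hA.isHermitian.add_smul_one_eq_conj_diagonal,
      inv_conj_diagonal _ fun i => (add_pos (hA.eigenvalues_pos i) ht).ne']
    rfl
  calc
    _ = ∫ t in Ioi 0, schurMultiplier U (of fun i j => (eig i + t)⁻¹ * (eig j + t)⁻¹) X :=
      setIntegral_congr_fun measurableSet_Ioi fun t ht => by
        rw [hresolvent t ht, conj_diagonal_mul_mul_conj_diagonal]
    _ = _ := integral_schurMultiplier U _ _ X fun i j =>
      integrableOn_inv_add_mul_inv_add (hA.eigenvalues_pos i) (hA.eigenvalues_pos j)

lemma integral_cfc_rpow_mul_mul_cfc_rpow_one_sub (X : Matrix ι ι ℝ) :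
    ∫ u in Icc (0 : ℝ) 1, hA.isHermitian.cfc (· ^ u) * X * hA.isHermitian.cfc (· ^ (1 - u))
      = schurMultiplier hA.isHermitian.eigenvectorUnitary (of fun i j =>
        logMean (hA.isHermitian.eigenvalues i) (hA.isHermitian.eigenvalues j)) X := by
  set U := hA.isHermitian.eigenvectorUnitary
  set eig := hA.isHermitian.eigenvalues
  have hpow : ∀ u : ℝ,
      hA.isHermitian.cfc (· ^ u) = conjStarAlgAut ℝ _ U (diagonal fun i => eig i ^ u) :=
    fun u => rfl
  simp only [hpow, conj_diagonal_mul_mul_conj_diagonal]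
  exact integral_schurMultiplier U _ _ X fun i j =>
    (continuous_rpow_mul_rpow_one_sub (hA.eigenvalues_pos i)
      (hA.eigenvalues_pos j)).integrableOn_Icc

end PosDef

end Matrix

theorem kubo_mori_inverse_general (n : ℕ) (D : Matrix (Fin n) (Fin n) ℝ)
    (hD : D.PosDef) :
    let G : Matrix (Fin n) (Fin n) ℝ → Matrix (Fin n) (Fin n) ℝ := fun X =>
      ∫ t in Set.Ioi (0:ℝ), (D + t • 1)⁻¹ * X * (D + t • 1)⁻¹
    let Ginv : Matrix (Fin n) (Fin n) ℝ → Matrix (Fin n) (Fin n) ℝ := fun X =>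
      ∫ u in Set.Icc (0:ℝ) 1,
        matrixRpow hD.isHermitian u * X * matrixRpow hD.isHermitian (1 - u)
    ∀ X : Matrix (Fin n) (Fin n) ℝ, X.IsSymm → Ginv (G X) = X ∧ G (Ginv X) = X := by
  intro G Ginv X _
  set eig := hD.isHermitian.eigenvalues
  have hG : ∀ Y, G Y = _ := hD.integral_resolvent_mul_mul_resolvent
  have hGinv : ∀ Y, Ginv Y = _ := hD.integral_cfc_rpow_mul_mul_cfc_rpow_one_sub
  have hkernels : (of fun i j => resolventKernel (eig i) (eig j)) ⊙
      (of fun i j => logMean (eig i) (eig j)) = of fun _ _ => 1 := by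
    ext i j
    exact resolventKernel_mul_logMean (hD.eigenvalues_pos i) (hD.eigenvalues_pos j)
  refine ⟨?_, ?_⟩
  · rw [hG, hGinv, schurMultiplier_schurMultiplier, hadamard_comm, hkernels, schurMultiplier_ones]
  · rw [hGinv, hG, schurMultiplier_schurMultiplier, hkernels, schurMultiplier_ones]

/-- For a positive definite real symmetric matrix `D`, the map
`X ↦ ∫_0^1 D^u X D^{1-u} du` is inverse to `X ↦ ∫_0^∞ (D+tI)⁻¹ X (D+tI)⁻¹ dt`
on symmetric matrices. -/
theorem kubo_mori_inverse (n : ℕ) (D : Matrix (Fin n) (Fin n) ℝ)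
    (hD : D.PosDef) (hDs : D.IsSymm) :
    let G : Matrix (Fin n) (Fin n) ℝ → Matrix (Fin n) (Fin n) ℝ := fun X =>
      ∫ t in Set.Ioi (0:ℝ), (D + t • 1)⁻¹ * X * (D + t • 1)⁻¹
    let Ginv : Matrix (Fin n) (Fin n) ℝ → Matrix (Fin n) (Fin n) ℝ := fun X =>
      ∫ u in Set.Icc (0:ℝ) 1,
        matrixRpow hD.isHermitian u * X * matrixRpow hD.isHermitian (1 - u)
    ∀ X : Matrix (Fin n) (Fin n) ℝ, X.IsSymm → Ginv (G X) = X ∧ G (Ginv X) = X :=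
  kubo_mori_inverse_general n D hD
end

section
/- Let K be the linear map of the previous context, (Kc)_{kl} = (1/m_kl)[m_kkl √λ_k c_k + m_kll √λ_l c_l] for c ∈ ℝ^n. Then Tr(K*K) = 2 Σ_{k,l} m_kkl² λ_k / m_kl² + (1/2) Σ_i 1/λ_i. -/
open MeasureTheory

lemma integral_Ioi_shift_rpow (a : ℝ) (ha : 0 < a) {p : ℝ} (hp : p < -1) :
    ∫ t in Set.Ioi (0:ℝ), (a + t) ^ p = -a ^ (p + 1) / (p + 1) := by
  have hpre : Set.Ioi (0:ℝ) = (fun t => a + t) ⁻¹' Set.Ioi a := by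
    ext x; simp
  rw [hpre,
    (measurePreserving_add_left volume a).setIntegral_preimage_emb
      (MeasurableEquiv.addLeft a).measurableEmbedding (fun x => x ^ p) _]
  exact integral_Ioi_rpow_of_lt hp ha

lemma integral_Ioi_shift_two (a : ℝ) (ha : 0 < a) :
    ∫ t in Set.Ioi (0:ℝ), (a + t)⁻¹ * (a + t)⁻¹ = a⁻¹ := by
  have h := integral_Ioi_shift_rpow a ha (p := -2) (by norm_num)
  have hcong : ∀ t ∈ Set.Ioi (0:ℝ), (a + t)⁻¹ * (a + t)⁻¹ = (a + t) ^ (-2 : ℝ) := by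
    intro t ht
    have hpos : 0 < a + t := by have := ht.out; linarith
    rw [show (-2 : ℝ) = -((2:ℕ):ℝ) by norm_num, Real.rpow_neg hpos.le, Real.rpow_natCast,
      sq, mul_inv]
  rw [setIntegral_congr_fun measurableSet_Ioi hcong, h]
  rw [show (-2 : ℝ) + 1 = -((1:ℕ):ℝ) by norm_num, Real.rpow_neg ha.le, Real.rpow_natCast]
  norm_num

lemma integral_Ioi_shift_three (a : ℝ) (ha : 0 < a) :
    ∫ t in Set.Ioi (0:ℝ), (a + t)⁻¹ * (a + t)⁻¹ * (a + t)⁻¹ = (a ^ 2)⁻¹ / 2 := by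
  have h := integral_Ioi_shift_rpow a ha (p := -3) (by norm_num)
  have hcong : ∀ t ∈ Set.Ioi (0:ℝ), (a + t)⁻¹ * (a + t)⁻¹ * (a + t)⁻¹ = (a + t) ^ (-3 : ℝ) := by
    intro t ht
    have hpos : 0 < a + t := by have := ht.out; linarith
    rw [show (-3 : ℝ) = -((3:ℕ):ℝ) by norm_num, Real.rpow_neg hpos.le, Real.rpow_natCast,
      pow_succ, sq, mul_inv, mul_inv]
  rw [setIntegral_congr_fun measurableSet_Ioi hcong, h]
  rw [show (-3 : ℝ) + 1 = -((2:ℕ):ℝ) by norm_num, Real.rpow_neg ha.le, Real.rpow_natCast]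
  ring

/-- For `K` given by `(Kc)_{kl} = (1/m_kl)[m_kkl √λ_k c_k + m_kll √λ_l c_l]`, the trace
`Tr(K*K) = Σ_i ‖K e_i‖²` (Hilbert–Schmidt) equals
`2 Σ_{k,l} m_kkl² λ_k / m_kl² + (1/2) Σ_i 1/λ_i`. -/
theorem trace_of_K_star_K (n : ℕ) (l : Fin n → ℝ) (hl : ∀ i, 0 < l i) :
    let m2 : Fin n → Fin n → ℝ := fun k p =>
      ∫ t in Set.Ioi (0:ℝ), (l k + t)⁻¹ * (l p + t)⁻¹;
    let m3 : Fin n → Fin n → Fin n → ℝ := fun i j k =>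
      ∫ t in Set.Ioi (0:ℝ), (l i + t)⁻¹ * (l j + t)⁻¹ * (l k + t)⁻¹;
    let K : (Fin n → ℝ) → Matrix (Fin n) (Fin n) ℝ := fun c k p =>
      (1 / m2 k p) * (m3 k k p * Real.sqrt (l k) * c k + m3 k p p * Real.sqrt (l p) * c p);
    let hs : Matrix (Fin n) (Fin n) ℝ → ℝ := fun M => ∑ k, ∑ p, (M k p) ^ 2;
    (∑ i, hs (K (Pi.single i 1))) =
      2 * (∑ k, ∑ p, (m3 k k p) ^ 2 * l k / (m2 k p) ^ 2) + (1 / 2) * ∑ i, 1 / l i := by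
  intro m2 m3 K hs
  have hm2 : ∀ k, m2 k k = (l k)⁻¹ := fun k => integral_Ioi_shift_two _ (hl k)
  have hm3 : ∀ k, m3 k k k = ((l k) ^ 2)⁻¹ / 2 := fun k => integral_Ioi_shift_three _ (hl k)
  have hsym2 : ∀ k p, m2 p k = m2 k p := by
    intro k p; simp only [m2, mul_comm]
  have hsym3 : ∀ k p, m3 k p p = m3 p p k := by
    intro k p; simp only [m3, mul_comm, mul_assoc, mul_left_comm]
  -- abbreviation
  set A : Fin n → Fin n → ℝ := fun k p => m3 k k p * Real.sqrt (l k) / m2 k p with hA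
  have key : ∀ k p : Fin n, ∑ i, (K (Pi.single i 1) k p) ^ 2 =
      A k p ^ 2 + A p k ^ 2 + (if k = p then 2 * A k p * A p k else 0) := by
    intro k p
    have hKi : ∀ i, K (Pi.single i 1) k p =
        A k p * (if k = i then 1 else 0) + A p k * (if p = i then 1 else 0) := by
      intro i
      simp only [K, hA, Pi.single_apply, hsym3 k p, hsym2 k p]
      split_ifs <;> ring
    simp only [hKi]
    have hexp : ∀ i, (A k p * (if k = i then 1 else 0) + A p k * (if p = i then 1 else 0)) ^ 2 =
        A k p ^ 2 * (if k = i then 1 else 0) + A p k ^ 2 * (if p = i then 1 else 0) +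
        2 * A k p * A p k * ((if k = i then 1 else 0) * (if p = i then 1 else 0)) := by
      intro i; split_ifs <;> ring
    simp only [hexp]
    rw [Finset.sum_add_distrib, Finset.sum_add_distrib, ← Finset.mul_sum, ← Finset.mul_sum,
      ← Finset.mul_sum]
    have h1 : ∑ i, (if k = i then (1:ℝ) else 0) = 1 := by simp
    have h2 : ∑ i, (if p = i then (1:ℝ) else 0) = 1 := by simp
    have h3 : ∑ i, ((if k = i then (1:ℝ) else 0) * (if p = i then 1 else 0)) =
        if k = p then 1 else 0 := by
      rcases eq_or_ne k p with h | h
      · subst h; simp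
      · have : ∀ i, ((if k = i then (1:ℝ) else 0) * (if p = i then 1 else 0)) = 0 := by
          intro i
          rcases eq_or_ne k i with rfl | hk
          · simp [Ne.symm h]
          · simp [hk]
        simp [this, h, Ne.symm h]
    rw [h1, h2, h3]
    split_ifs <;> ring
  have hswap : (∑ i, hs (K (Pi.single i 1))) = ∑ k, ∑ p, ∑ i, (K (Pi.single i 1) k p) ^ 2 := by
    simp only [hs]
    rw [Finset.sum_comm]
    congr 1; ext k
    rw [Finset.sum_comm]
  rw [hswap]
  have hcomm : ∑ k, ∑ p, A p k ^ 2 = ∑ k, ∑ p, A k p ^ 2 := Finset.sum_comm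
  have split : ∀ k : Fin n, ∑ p, (A k p ^ 2 + A p k ^ 2 + (if k = p then 2 * A k p * A p k else 0))
      = (∑ p, A k p ^ 2) + (∑ p, A p k ^ 2) + 2 * A k k * A k k := by
    intro k
    rw [Finset.sum_add_distrib, Finset.sum_add_distrib]
    congr 1
    simp
  have hA2 : ∀ k p, A k p ^ 2 = m3 k k p ^ 2 * l k / m2 k p ^ 2 := by
    intro k p
    rw [hA]
    rw [div_pow, mul_pow, Real.sq_sqrt (hl k).le]
  have hdiag : ∀ k, 2 * A k k * A k k = (1 / 2) * (1 / l k) := by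
    intro k
    simp only [hA]
    rw [hm2 k, hm3 k]
    have hlk := (hl k).ne'
    have hsq : Real.sqrt (l k) * Real.sqrt (l k) = l k := Real.mul_self_sqrt (hl k).le
    field_simp
    ring_nf
    rw [show Real.sqrt (l k) ^ 2 = Real.sqrt (l k) * Real.sqrt (l k) by ring, hsq]
  rw [Finset.sum_congr rfl (fun k _ => Finset.sum_congr rfl (fun p _ => key k p)), Finset.sum_congr rfl (fun k _ => split k),
    Finset.sum_add_distrib, Finset.sum_add_distrib, hcomm,
    Finset.sum_congr rfl (fun k _ => hdiag k)]
  simp only [hA2]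
  rw [← Finset.mul_sum]
  ring
end
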